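/- arXiv:2202.10811 — 3 statements merged into one kernel-verified Lean document; each statement's English description precedes it below -/
import Mathlib

section
/- Let d ≥ 1, λ ∈ (0,1), d_λ > 0, and Δx > 0. For each fixed α ∈ ℤ^d, the family (G_{α,β})_{β ∈ ℤ^d, β ≠ α} is summable, G_{α,α} = −∑_{β ≠ α} G_{α,β}, and 0 ≤ G_{α,α} ≤ Δx^d · μ_λ({z ∈ ℝ^d : |z| > Δx/2}). -/
/-!
Let `ν` be `μ_λ` restricted to `{|z| > Δx/2}`; it is finite because `d + 2λ > d`. By Fubini,
`G_{α,β} = |R_α ∩ R_β| ν(ℝ^d) - P(x + z ∈ R_β)` with `P = Leb|_{R_α} ⊗ ν`, so off the diagonal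
`G_{α,β} = -P(x + z ∈ R_β)`. The cells partition `ℝ^d`, hence the events `x + z ∈ R_β` partition
the product space: the off-diagonal weights sum to `-P(x + z ∉ R_α)`, while
`G_{α,α} = P(univ) - P(x + z ∈ R_α) = P(x + z ∉ R_α)`, which lies in `[0, Δx^d ν(ℝ^d)]`.
-/

open MeasureTheory

/-- The Lévy-type measure `μ_λ` with density `d_λ |z|^(-(d+2λ))` w.r.t. Lebesgue measure. -/
noncomputable def fracMeasure (d : ℕ) (lam dl : ℝ) :
    Measure (EuclideanSpace ℝ (Fin d)) :=
  volume.withDensity (fun z => ENNReal.ofReal (dl * ‖z‖ ^ (-((d : ℝ) + 2 * lam))))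

/-- The spatial grid cell `R_α = αΔx + [-Δx/2, Δx/2)^d`. -/
def cell (d : ℕ) (dx : ℝ) (a : Fin d → ℤ) : Set (EuclideanSpace ℝ (Fin d)) :=
  {x | ∀ k : Fin d, (a k : ℝ) * dx - dx / 2 ≤ x k ∧ x k < (a k : ℝ) * dx + dx / 2}

/-- The finite-volume weight
`G_{α,β} = ∫_{R_α} ∫_{|z| > Δx/2} (1_{R_β}(x) - 1_{R_β}(x+z)) dμ_λ(z) dx`. -/
noncomputable def weight (d : ℕ) (lam dl dx : ℝ) (a b : Fin d → ℤ) : ℝ :=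
  ∫ x in cell d dx a,
    ∫ z in {z : EuclideanSpace ℝ (Fin d) | dx / 2 < ‖z‖},
      ((cell d dx b).indicator (fun _ => (1 : ℝ)) x
        - (cell d dx b).indicator (fun _ => (1 : ℝ)) (x + z)) ∂(fracMeasure d lam dl)

open Set

section IntegrabilityAtInfinity

variable {E : Type*} [NormedAddCommGroup E] [NormedSpace ℝ E] [FiniteDimensional ℝ E]
  [MeasurableSpace E] [BorelSpace E] {μ : Measure E} [μ.IsAddHaarMeasure]

theorem integrableOn_norm_rpow_neg {s r : ℝ} (hs : (Module.finrank ℝ E : ℝ) < s) (hr : 0 < r) :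
    IntegrableOn (fun z : E => ‖z‖ ^ (-s)) {z | r < ‖z‖} μ := by
  have hs0 : 0 ≤ s := (Nat.cast_nonneg _).trans hs.le
  refine ((integrable_one_add_norm hs).div_const ((1 + r⁻¹) ^ (-s))).integrableOn.mono'
    (measurable_norm.pow_const _).aestronglyMeasurable ?_
  filter_upwards [ae_restrict_mem (measurableSet_lt measurable_const measurable_norm)] with z hz
  have hz0 : 0 < ‖z‖ := hr.trans hz
  have hle : (1 + ‖z‖) / (1 + r⁻¹) ≤ ‖z‖ := by
    rw [div_le_iff₀ (by positivity), mul_one_add, add_comm]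
    gcongr
    rw [← div_eq_mul_inv, one_le_div hr]
    exact hz.le
  rw [Real.norm_of_nonneg (by positivity), ← Real.div_rpow (by positivity) (by positivity)]
  exact Real.rpow_le_rpow_of_nonpos (by positivity) hle (neg_nonpos.2 hs0)

end IntegrabilityAtInfinity

instance (d : ℕ) (lam dl : ℝ) : SFinite (fracMeasure d lam dl) := by
  unfold fracMeasure
  infer_instance

theorem isFiniteMeasure_fracMeasure_restrict (d : ℕ) {lam r : ℝ} (dl : ℝ) (hlam : 0 < lam)
    (hr : 0 < r) : IsFiniteMeasure ((fracMeasure d lam dl).restrict {z | r < ‖z‖}) := by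
  have hint := (integrableOn_norm_rpow_neg (μ := volume) (s := (d : ℝ) + 2 * lam)
    (by rw [finrank_euclideanSpace_fin]; linarith) hr).const_mul dl
  refine isFiniteMeasure_restrict.2 (ne_of_lt ?_)
  rw [fracMeasure, withDensity_apply _ (measurableSet_lt measurable_const measurable_norm)]
  exact hint.lintegral_lt_top

theorem integral_integral_indicator_sub_indicator_add {E : Type*} [MeasurableSpace E] [Add E]
    [MeasurableAdd₂ E] {μ ν : Measure E} [IsFiniteMeasure μ] [IsFiniteMeasure ν] {C : Set E}
    (hC : MeasurableSet C) :
    ∫ x, ∫ z, (C.indicator (fun _ => (1 : ℝ)) x - C.indicator (fun _ => (1 : ℝ)) (x + z)) ∂ν ∂μ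
      = μ.real C * ν.real univ - (μ.prod ν).real {p | p.1 + p.2 ∈ C} := by
  have hsum : MeasurableSet {p : E × E | p.1 + p.2 ∈ C} := measurable_add hC
  have hprod : MeasurableSet (C ×ˢ (univ : Set E)) := hC.prod MeasurableSet.univ
  have hpoint : ∀ x z, C.indicator (fun _ => (1 : ℝ)) x - C.indicator (fun _ => (1 : ℝ)) (x + z)
      = ((C ×ˢ univ).indicator 1 - {p : E × E | p.1 + p.2 ∈ C}.indicator 1 : E × E → ℝ) (x, z) := by
    intro x z
    classical
    simp only [Pi.sub_apply, indicator_apply, mem_prod, mem_univ, and_true, mem_ofPred_eq,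
      Pi.one_apply]
  simp_rw [hpoint]
  rw [← integral_prod _ (((integrable_const 1).indicator hprod).sub
      ((integrable_const 1).indicator hsum)),
    integral_sub' ((integrable_const 1).indicator hprod) ((integrable_const 1).indicator hsum),
    integral_indicator_one hprod, integral_indicator_one hsum, measureReal_prod_prod]

theorem hasSum_measureReal_preimage_singleton {α β : Type*} [MeasurableSpace α] {μ : Measure α}
    [IsFiniteMeasure μ] {s : Set β} (hs : s.Countable) {f : α → β}
    (hf : ∀ y ∈ s, MeasurableSet (f ⁻¹' {y})) :
    HasSum (fun b : s => μ.real (f ⁻¹' {↑b})) (μ.real (f ⁻¹' s)) := by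
  have htsum := tsum_measure_preimage_singleton (μ := μ) hs hf
  have h := ENNReal.hasSum_toReal (htsum ▸ measure_ne_top μ _)
  rwa [← ENNReal.tsum_toReal_eq fun _ => measure_ne_top μ _, htsum] at h

noncomputable def cellIndex {d : ℕ} (dx : ℝ) (x : EuclideanSpace ℝ (Fin d)) : Fin d → ℤ :=
  fun k => ⌊x k / dx + 1 / 2⌋

theorem measurable_cellIndex (d : ℕ) (dx : ℝ) :
    Measurable (cellIndex (d := d) dx) :=
  measurable_pi_lambda _ fun k => Int.measurable_floor.comp (by fun_prop)

theorem cell_eq_preimage_cellIndex (d : ℕ) {dx : ℝ} (hdx : 0 < dx) (b : Fin d → ℤ) :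
    cell d dx b = cellIndex dx ⁻¹' {b} := by
  ext x
  simp only [cell, cellIndex, mem_preimage, mem_singleton_iff, funext_iff, Int.floor_eq_iff]
  refine forall_congr' fun k => and_congr ?_ ?_
  · rw [← sub_le_iff_le_add, le_div_iff₀ hdx]; constructor <;> intro h <;> linarith
  · rw [← lt_sub_iff_add_lt, div_lt_iff₀ hdx]; constructor <;> intro h <;> linarith

theorem measurableSet_cell (d : ℕ) {dx : ℝ} (hdx : 0 < dx) (b : Fin d → ℤ) :
    MeasurableSet (cell d dx b) := by
  rw [cell_eq_preimage_cellIndex d hdx]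
  exact measurable_cellIndex d dx (measurableSet_singleton b)

theorem volume_cell (d : ℕ) {dx : ℝ} (hdx : 0 < dx) (b : Fin d → ℤ) :
    volume (cell d dx b) = ENNReal.ofReal (dx ^ d) := by
  have hcell : cell d dx b = (MeasurableEquiv.toLp 2 (Fin d → ℝ)).symm ⁻¹'
      (univ.pi fun k => Ico ((b k : ℝ) * dx - dx / 2) ((b k : ℝ) * dx + dx / 2)) := by
    ext x
    simp [cell, mem_pi, mem_Ico]
  rw [hcell, (EuclideanSpace.volume_preserving_symm_measurableEquiv_toLp (Fin d)).measure_preimage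
    (MeasurableSet.univ_pi fun k => measurableSet_Ico).nullMeasurableSet, volume_pi_pi]
  simp only [Real.volume_Ico, add_sub_sub_cancel, add_halves, Finset.prod_const,
    Finset.card_univ, Fintype.card_fin, ENNReal.ofReal_pow hdx.le]

theorem isFiniteMeasure_restrict_cell (d : ℕ) {dx : ℝ} (hdx : 0 < dx) (a : Fin d → ℤ) :
    IsFiniteMeasure (volume.restrict (cell d dx a)) :=
  isFiniteMeasure_restrict.2 (volume_cell d hdx a ▸ ENNReal.ofReal_ne_top)

theorem disjoint_cell (d : ℕ) {dx : ℝ} (hdx : 0 < dx) {a b : Fin d → ℤ} (h : b ≠ a) :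
    Disjoint (cell d dx b) (cell d dx a) := by
  rw [cell_eq_preimage_cellIndex d hdx, cell_eq_preimage_cellIndex d hdx]
  exact (disjoint_singleton.2 h).preimage _

section Weights

variable {d : ℕ} {lam dl dx : ℝ}

noncomputable def cellJumpMeasure (d : ℕ) (lam dl dx : ℝ) (a : Fin d → ℤ) :
    Measure (EuclideanSpace ℝ (Fin d) × EuclideanSpace ℝ (Fin d)) :=
  (volume.restrict (cell d dx a)).prod ((fracMeasure d lam dl).restrict {z | dx / 2 < ‖z‖})

theorem isFiniteMeasure_cellJumpMeasure (hlam : 0 < lam) (hdx : 0 < dx) (a : Fin d → ℤ) :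
    IsFiniteMeasure (cellJumpMeasure d lam dl dx a) := by
  have := isFiniteMeasure_restrict_cell d hdx a
  have := isFiniteMeasure_fracMeasure_restrict d dl hlam (half_pos hdx)
  unfold cellJumpMeasure
  infer_instance

theorem weight_eq_sub (hlam : 0 < lam) (hdx : 0 < dx) (a b : Fin d → ℤ) :
    weight d lam dl dx a b
      = volume.real (cell d dx b ∩ cell d dx a)
          * ((fracMeasure d lam dl).restrict {z | dx / 2 < ‖z‖}).real univ
        - (cellJumpMeasure d lam dl dx a).real {p | p.1 + p.2 ∈ cell d dx b} := by
  have := isFiniteMeasure_restrict_cell d hdx a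
  have := isFiniteMeasure_fracMeasure_restrict d dl hlam (half_pos hdx)
  rw [← measureReal_restrict_apply (measurableSet_cell d hdx b)]
  exact integral_integral_indicator_sub_indicator_add (measurableSet_cell d hdx b)

theorem weight_of_ne (hlam : 0 < lam) (hdx : 0 < dx) {a b : Fin d → ℤ} (hb : b ≠ a) :
    weight d lam dl dx a b
      = -(cellJumpMeasure d lam dl dx a).real {p | p.1 + p.2 ∈ cell d dx b} := by
  rw [weight_eq_sub hlam hdx, (disjoint_cell d hdx hb).inter_eq, measureReal_empty, zero_mul,
    zero_sub]

theorem measureReal_univ_cellJumpMeasure (hdx : 0 < dx) (a : Fin d → ℤ) :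
    (cellJumpMeasure d lam dl dx a).real univ
      = dx ^ d * (fracMeasure d lam dl {z | dx / 2 < ‖z‖}).toReal := by
  rw [cellJumpMeasure, ← univ_prod_univ, measureReal_prod_prod, measureReal_restrict_apply_univ,
    measureReal_restrict_apply_univ, measureReal_def, volume_cell d hdx,
    ENNReal.toReal_ofReal (by positivity), measureReal_def]

theorem weight_self (hlam : 0 < lam) (hdx : 0 < dx) (a : Fin d → ℤ) :
    weight d lam dl dx a a
      = (cellJumpMeasure d lam dl dx a).real {p | p.1 + p.2 ∈ cell d dx a}ᶜ := by
  have := isFiniteMeasure_cellJumpMeasure (dl := dl) hlam hdx a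
  have hT : MeasurableSet {p : EuclideanSpace ℝ (Fin d) × EuclideanSpace ℝ (Fin d) |
      p.1 + p.2 ∈ cell d dx a} := measurable_add (measurableSet_cell d hdx a)
  rw [weight_eq_sub hlam hdx, inter_self, measureReal_compl hT, cellJumpMeasure,
    ← measureReal_restrict_apply_univ, ← measureReal_prod_prod, univ_prod_univ]

theorem hasSum_cellJumpMeasure (hlam : 0 < lam) (hdx : 0 < dx) (a : Fin d → ℤ) :
    HasSum (fun b : {b : Fin d → ℤ // b ≠ a} =>
        (cellJumpMeasure d lam dl dx a).real {p | p.1 + p.2 ∈ cell d dx b})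
      ((cellJumpMeasure d lam dl dx a).real {p | p.1 + p.2 ∈ cell d dx a}ᶜ) := by
  have := isFiniteMeasure_cellJumpMeasure (dl := dl) hlam hdx a
  simp_rw [cell_eq_preimage_cellIndex d hdx]
  exact hasSum_measureReal_preimage_singleton (s := {a}ᶜ) (to_countable _)
    fun y _ => (measurable_cellIndex d dx).comp measurable_add (measurableSet_singleton y)

end Weights

theorem stmt1_general (d : ℕ) (lam dl dx : ℝ)
    (hlam : lam ∈ Set.Ioo (0 : ℝ) 1) (hdx : 0 < dx) (a : Fin d → ℤ) :
    Summable (fun b : {b : Fin d → ℤ // b ≠ a} => weight d lam dl dx a b) ∧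
    weight d lam dl dx a a
      = - ∑' b : {b : Fin d → ℤ // b ≠ a}, weight d lam dl dx a b ∧
    0 ≤ weight d lam dl dx a a ∧
    weight d lam dl dx a a
      ≤ dx ^ d * (fracMeasure d lam dl {z | dx / 2 < ‖z‖}).toReal := by
  have hsum : HasSum (fun b : {b : Fin d → ℤ // b ≠ a} => weight d lam dl dx a b)
      (-weight d lam dl dx a a) := by
    rw [weight_self hlam.1 hdx]
    exact (hasSum_cellJumpMeasure hlam.1 hdx a).neg.congr_fun fun b =>
      weight_of_ne hlam.1 hdx b.2
  refine ⟨hsum.summable, by rw [hsum.tsum_eq, neg_neg], ?_, ?_⟩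
  · rw [weight_self hlam.1 hdx]
    exact measureReal_nonneg
  · have := isFiniteMeasure_cellJumpMeasure (dl := dl) hlam.1 hdx a
    rw [weight_self hlam.1 hdx, ← measureReal_univ_cellJumpMeasure hdx]
    exact measureReal_mono (subset_univ _)

theorem stmt1 (d : ℕ) (hd : 1 ≤ d) (lam dl dx : ℝ)
    (hlam : lam ∈ Set.Ioo (0 : ℝ) 1) (hdl : 0 < dl) (hdx : 0 < dx) (a : Fin d → ℤ) :
    Summable (fun b : {b : Fin d → ℤ // b ≠ a} => weight d lam dl dx a b) ∧
    weight d lam dl dx a a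
      = - ∑' b : {b : Fin d → ℤ // b ≠ a}, weight d lam dl dx a b ∧
    0 ≤ weight d lam dl dx a a ∧
    weight d lam dl dx a a
      ≤ dx ^ d * (fracMeasure d lam dl {z | dx / 2 < ‖z‖}).toReal :=
  stmt1_general d lam dl dx hlam hdx a
end

section
/- Let G : ℤ^d × ℤ^d → ℝ satisfy G(α,β) = G(β,α) for all α, β, G(α,β) ≤ 0 whenever α ≠ β, and for each α the family (G(α,β))_{β ∈ ℤ^d} is summable with ∑_β G(α,β) = 0. Let η′ : ℝ → ℝ and A : ℝ → ℝ be nondecreasing functions and u : ℤ^d → ℝ. Assume that the doubly indexed families (η′(u_α) G(α,β) A(u_β))_{(α,β)} and ((η′(u_α) − η′(u_β)) G(α,β) (A(u_β) − A(u_α)))_{(α,β)} are summable over ℤ^d × ℤ^d. Then ∑_{α,β ∈ ℤ^d} η′(u_α) G(α,β) A(u_β) = (1/2) ∑_{α,β ∈ ℤ^d} (η′(u_α) − η′(u_β)) G(α,β) (A(u_β) − A(u_α)), and this common value is nonnegative. -/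
set_option maxHeartbeats 1000000 in
theorem stmt3 (d : ℕ) (hd : 1 ≤ d) (G : (Fin d → ℤ) → (Fin d → ℤ) → ℝ)
    (hsymm : ∀ a b, G a b = G b a)
    (hneg : ∀ a b, a ≠ b → G a b ≤ 0)
    (hrow : ∀ a, Summable (fun b => G a b))
    (hzero : ∀ a, ∑' b, G a b = 0)
    (η' A : ℝ → ℝ) (hη : Monotone η') (hA : Monotone A)
    (u : (Fin d → ℤ) → ℝ)
    (h1 : Summable (fun p : (Fin d → ℤ) × (Fin d → ℤ) =>
      η' (u p.1) * G p.1 p.2 * A (u p.2)))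
    (h2 : Summable (fun p : (Fin d → ℤ) × (Fin d → ℤ) =>
      (η' (u p.1) - η' (u p.2)) * G p.1 p.2 * (A (u p.2) - A (u p.1)))) :
    (∑' p : (Fin d → ℤ) × (Fin d → ℤ), η' (u p.1) * G p.1 p.2 * A (u p.2))
      = (1 / 2) * ∑' p : (Fin d → ℤ) × (Fin d → ℤ),
          (η' (u p.1) - η' (u p.2)) * G p.1 p.2 * (A (u p.2) - A (u p.1)) ∧
    0 ≤ ∑' p : (Fin d → ℤ) × (Fin d → ℤ), η' (u p.1) * G p.1 p.2 * A (u p.2) := by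
  classical
  set c : (Fin d → ℤ) → ℝ := fun a => η' (u a) * A (u a) with hc
  -- diagonal entries are nonnegative
  have hdiag : ∀ a, 0 ≤ G a a := by
    intro a
    have h := Summable.tsum_eq_add_tsum_ite (hrow a) a
    have hT : (∑' b, if b = a then 0 else G a b) ≤ 0 := by
      apply tsum_nonpos
      intro b
      by_cases hb : b = a
      · simp [hb]
      · simpa [hb] using hneg a b (fun h => hb h.symm)
    rw [hzero a] at h
    linarith
  -- absolute row sums
  have habs : ∀ a, ∑' b, |G a b| = 2 * G a a := by
    intro a
    have hpt : ∀ b, |G a b| = (if b = a then 2 * G a a else 0) - G a b := by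
      intro b
      by_cases hb : b = a
      · subst hb; rw [abs_of_nonneg (hdiag b)]; simp; ring
      · rw [abs_of_nonpos (hneg a b (fun h => hb h.symm))]; simp [hb]
    have hsum_ite : Summable (fun b : (Fin d → ℤ) => if b = a then 2 * G a a else 0) :=
      (hasSum_ite_eq a (2 * G a a)).summable
    calc ∑' b, |G a b| = ∑' b, ((if b = a then 2 * G a a else 0) - G a b) :=
          tsum_congr hpt
      _ = (∑' b, if b = a then 2 * G a a else 0) - ∑' b, G a b :=
          Summable.tsum_sub hsum_ite (hrow a)
      _ = 2 * G a a := by rw [tsum_ite_eq, hzero a]; ring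
  -- f4 : the swapped version of f1
  have hf4 : Summable (fun p : (Fin d → ℤ) × (Fin d → ℤ) =>
      η' (u p.2) * G p.1 p.2 * A (u p.1)) := by
    have := h1.prod_symm
    exact this.congr (fun p => by
      simp only [Prod.fst_swap, Prod.snd_swap, hsymm p.2 p.1])
  have hf4t : (∑' p : (Fin d → ℤ) × (Fin d → ℤ), η' (u p.2) * G p.1 p.2 * A (u p.1))
      = ∑' p : (Fin d → ℤ) × (Fin d → ℤ), η' (u p.1) * G p.1 p.2 * A (u p.2) := by
    have := (Equiv.prodComm (Fin d → ℤ) (Fin d → ℤ)).tsum_eq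
      (fun p : (Fin d → ℤ) × (Fin d → ℤ) => η' (u p.1) * G p.1 p.2 * A (u p.2))
    rw [← this]
    exact tsum_congr (fun p => by
      simp only [Equiv.prodComm_apply, Prod.fst_swap, Prod.snd_swap, hsymm p.2 p.1])
  -- f2 + f3 is summable
  have h23 : Summable (fun p : (Fin d → ℤ) × (Fin d → ℤ) =>
      (c p.1 + c p.2) * G p.1 p.2) := by
    have h := (h1.add hf4).sub h2
    exact h.congr (fun p => by simp only [hc]; ring)
  -- diagonal of h23 is summable
  have hdsum : Summable (fun a : (Fin d → ℤ) => (c a + c a) * G a a) :=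
    h23.comp_injective (i := fun a : (Fin d → ℤ) => (a, a))
      (fun a b h => congrArg Prod.fst h)
  have hdsum' : Summable (fun a : (Fin d → ℤ) => |c a| * (2 * G a a)) := by
    refine hdsum.abs.congr (fun a => ?_)
    rw [abs_mul, abs_of_nonneg (hdiag a)]
    rw [show |c a + c a| = 2 * |c a| by rw [← two_mul, abs_mul]; simp]
    ring
  -- f2 is summable with sum 0
  have hf2 : Summable (fun p : (Fin d → ℤ) × (Fin d → ℤ) => c p.1 * G p.1 p.2) := by
    rw [← summable_abs_iff]
    have key : Summable (fun p : (Fin d → ℤ) × (Fin d → ℤ) =>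
        |c p.1| * |G p.1 p.2|) := by
      apply (summable_prod_of_nonneg
        (f := fun p : (Fin d → ℤ) × (Fin d → ℤ) => |c p.1| * |G p.1 p.2|)
        (fun p => mul_nonneg (abs_nonneg _) (abs_nonneg _))).2
      constructor
      · intro a
        simpa using ((hrow a).abs).mul_left |c a|
      · refine hdsum'.congr (fun a => ?_)
        show |c a| * (2 * G a a) = ∑' y, |c a| * |G a y|
        rw [tsum_mul_left, habs a]
    exact key.congr (fun p => (abs_mul _ _).symm)
  have hf2t : (∑' p : (Fin d → ℤ) × (Fin d → ℤ), c p.1 * G p.1 p.2) = 0 := by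
    rw [Summable.tsum_prod' hf2 (fun a => (hrow a).mul_left (c a))]
    have : ∀ a : (Fin d → ℤ), (∑' b, c a * G a b) = 0 := by
      intro a
      rw [tsum_mul_left, hzero a, mul_zero]
    simp [this]
  -- f3 is summable with sum 0
  have hf3 : Summable (fun p : (Fin d → ℤ) × (Fin d → ℤ) => c p.2 * G p.1 p.2) := by
    have := hf2.prod_symm
    exact this.congr (fun p => by
      simp only [Prod.fst_swap, Prod.snd_swap, hsymm p.2 p.1])
  have hf3t : (∑' p : (Fin d → ℤ) × (Fin d → ℤ), c p.2 * G p.1 p.2) = 0 := by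
    have := (Equiv.prodComm (Fin d → ℤ) (Fin d → ℤ)).tsum_eq
      (fun p : (Fin d → ℤ) × (Fin d → ℤ) => c p.1 * G p.1 p.2)
    rw [← hf2t, ← this]
    exact tsum_congr (fun p => by
      simp only [Equiv.prodComm_apply, Prod.fst_swap, Prod.snd_swap, hsymm p.2 p.1])
  -- main identity
  set S := ∑' p : (Fin d → ℤ) × (Fin d → ℤ), η' (u p.1) * G p.1 p.2 * A (u p.2) with hS
  have hHpt : ∀ p : (Fin d → ℤ) × (Fin d → ℤ),
      (η' (u p.1) - η' (u p.2)) * G p.1 p.2 * (A (u p.2) - A (u p.1))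
        = (η' (u p.1) * G p.1 p.2 * A (u p.2) + η' (u p.2) * G p.1 p.2 * A (u p.1))
          - c p.1 * G p.1 p.2 - c p.2 * G p.1 p.2 := by
    intro p; simp only [hc]; ring
  have hTsum : (∑' p : (Fin d → ℤ) × (Fin d → ℤ),
      (η' (u p.1) - η' (u p.2)) * G p.1 p.2 * (A (u p.2) - A (u p.1))) = 2 * S := by
    calc (∑' p : (Fin d → ℤ) × (Fin d → ℤ),
        (η' (u p.1) - η' (u p.2)) * G p.1 p.2 * (A (u p.2) - A (u p.1)))
        = ∑' p : (Fin d → ℤ) × (Fin d → ℤ),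
          ((η' (u p.1) * G p.1 p.2 * A (u p.2) + η' (u p.2) * G p.1 p.2 * A (u p.1))
            - c p.1 * G p.1 p.2 - c p.2 * G p.1 p.2) := tsum_congr hHpt
      _ = ((∑' p : (Fin d → ℤ) × (Fin d → ℤ), (η' (u p.1) * G p.1 p.2 * A (u p.2)
            + η' (u p.2) * G p.1 p.2 * A (u p.1)))
            - ∑' p : (Fin d → ℤ) × (Fin d → ℤ), c p.1 * G p.1 p.2)
            - ∑' p : (Fin d → ℤ) × (Fin d → ℤ), c p.2 * G p.1 p.2 := by
          rw [Summable.tsum_sub (((h1.add hf4).sub hf2)) hf3, Summable.tsum_sub (h1.add hf4) hf2]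
      _ = 2 * S := by
          rw [Summable.tsum_add h1 hf4, hf2t, hf3t, hf4t, ← hS]; ring
  -- each term of h2's family is nonnegative
  have hterm : ∀ p : (Fin d → ℤ) × (Fin d → ℤ),
      0 ≤ (η' (u p.1) - η' (u p.2)) * G p.1 p.2 * (A (u p.2) - A (u p.1)) := by
    intro ⟨a, b⟩
    by_cases hab : a = b
    · subst hab; simp
    · have hG : G a b ≤ 0 := hneg a b hab
      have hxy : (η' (u a) - η' (u b)) * (A (u b) - A (u a)) ≤ 0 := by
        rcases le_total (u a) (u b) with h | h
        · have h1' : η' (u a) - η' (u b) ≤ 0 := sub_nonpos.2 (hη h)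
          have h2' : 0 ≤ A (u b) - A (u a) := sub_nonneg.2 (hA h)
          exact mul_nonpos_of_nonpos_of_nonneg h1' h2'
        · have h1' : 0 ≤ η' (u a) - η' (u b) := sub_nonneg.2 (hη h)
          have h2' : A (u b) - A (u a) ≤ 0 := sub_nonpos.2 (hA h)
          exact mul_nonpos_of_nonneg_of_nonpos h1' h2'
      nlinarith
  have hTnn : 0 ≤ ∑' p : (Fin d → ℤ) × (Fin d → ℤ),
      (η' (u p.1) - η' (u p.2)) * G p.1 p.2 * (A (u p.2) - A (u p.1)) :=
    tsum_nonneg hterm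
  constructor
  · rw [hTsum]; ring
  · rw [hTsum] at hTnn; linarith
end

section
/- Let F : ℝ² → ℝ be a monotone numerical flux. Then for all u, v, w, k ∈ ℝ: sign₀(u − k)·(F(u,v) − F(w,u)) ≥ (F(u⊤k, v⊤k) − F(w⊤k, u⊤k)) − (F(u⊥k, v⊥k) − F(w⊥k, u⊥k)). -/
/-- `sign₀(x) = x/|x|` for `x ≠ 0` and `sign₀(0) = 0`. -/
noncomputable def sign0 (x : ℝ) : ℝ := if x = 0 then 0 else x / |x|

theorem stmt4 (F : ℝ → ℝ → ℝ)
    (hF1 : ∀ b, Monotone (fun a => F a b))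
    (hF2 : ∀ a, Antitone (fun b => F a b))
    (u v w k : ℝ) :
    sign0 (u - k) * (F u v - F w u)
      ≥ (F (max u k) (max v k) - F (max w k) (max u k))
        - (F (min u k) (min v k) - F (min w k) (min u k)) := by
  rcases lt_trichotomy u k with h | h | h
  · have hs : sign0 (u - k) = -1 := by
      unfold sign0
      rw [if_neg (by linarith), abs_of_neg (by linarith)]
      rw [div_eq_iff (by linarith)]; ring
    rw [hs, max_eq_right h.le, min_eq_left h.le]
    have h1 : F k (max v k) ≤ F k k := hF2 k (le_max_right v k)
    have h2 : F k k ≤ F (max w k) k := hF1 k (le_max_right w k)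
    have h3 : F u v ≤ F u (min v k) := hF2 u (min_le_left v k)
    have h4 : F (min w k) u ≤ F w u := hF1 u (min_le_left w k)
    linarith
  · have hs : sign0 (u - k) = 0 := by simp [sign0, h]
    rw [hs, h, max_self, min_self]
    have h1 : F k (max v k) ≤ F k (min v k) := hF2 k (min_le_max)
    have h2 : F (min w k) k ≤ F (max w k) k := hF1 k (min_le_max)
    linarith
  · have hs : sign0 (u - k) = 1 := by
      unfold sign0
      rw [if_neg (by linarith), abs_of_pos (by linarith)]
      rw [div_self (by linarith)]
    rw [hs, max_eq_left h.le, min_eq_right h.le]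
    have h1 : F u (max v k) ≤ F u v := hF2 u (le_max_left v k)
    have h2 : F w u ≤ F (max w k) u := hF1 u (le_max_left w k)
    have h3 : F k k ≤ F k (min v k) := hF2 k (min_le_right v k)
    have h4 : F (min w k) k ≤ F k k := hF1 k (min_le_right w k)
    linarith
end
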